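/- For 0 < α < 2 and all a > 1, θ(α) - b(α,a)/a > 0, where b(α,a) = (1 + 2a - aα - √(1 + 4a - 4aα + a²(4 - 2α + α²)))/2 and θ(α) = (√(α² - 2α + 4) + α - 2)/2. -/
import Mathlib


noncomputable def bCoef (α a : ℝ) : ℝ :=
  (1 + 2 * a - a * α
    - Real.sqrt (1 + 4 * a - 4 * a * α + a ^ 2 * (4 - 2 * α + α ^ 2))) / 2

noncomputable def θCoef (α : ℝ) : ℝ :=
  (Real.sqrt (α ^ 2 - 2 * α + 4) + α - 2) / 2

/-- for 0 < α < 2 and all a > 1, θ(α) - b(α,a)/a > 0. -/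
theorem theta_minus_b_div_a_pos (α a : ℝ) (hα0 : 0 < α) (hα2 : α < 2) (ha : 1 < a) :
    θCoef α - bCoef α a / a > 0 := by
  have ha0 : (0:ℝ) < a := by linarith
  -- θ > 0
  have hθ : 0 < θCoef α := by
    have h1 : (2 - α) < Real.sqrt (α ^ 2 - 2 * α + 4) := by
      rw [show α ^ 2 - 2 * α + 4 = (2 - α) ^ 2 + 2 * α by ring]
      have := Real.sqrt_lt_sqrt (by positivity : (0:ℝ) ≤ (2 - α) ^ 2)
        (by nlinarith : (2 - α) ^ 2 < (2 - α) ^ 2 + 2 * α)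
      rwa [Real.sqrt_sq (by linarith)] at this
    unfold θCoef; linarith
  -- b < 0
  have hb : bCoef α a < 0 := by
    have h2 : (1 + 2 * a - a * α) < Real.sqrt (1 + 4 * a - 4 * a * α + a ^ 2 * (4 - 2 * α + α ^ 2)) := by
      have key : 1 + 4 * a - 4 * a * α + a ^ 2 * (4 - 2 * α + α ^ 2)
          = (1 + 2 * a - a * α) ^ 2 + 2 * a * α * (a - 1) := by ring
      rw [key]
      have hpos : 0 < 1 + 2 * a - a * α := by nlinarith
      have := Real.sqrt_lt_sqrt (by positivity : (0:ℝ) ≤ (1 + 2 * a - a * α) ^ 2)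
        (by nlinarith [mul_pos (mul_pos ha0 hα0) (sub_pos.mpr ha)] : (1 + 2 * a - a * α) ^ 2 < (1 + 2 * a - a * α) ^ 2 + 2 * a * α * (a - 1))
      rwa [Real.sqrt_sq hpos.le] at this
    unfold bCoef; linarith
  have : bCoef α a / a < 0 := div_neg_of_neg_of_pos hb ha0
  linarith
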